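/- arXiv:1506.04722 — 5 statements merged into one kernel-verified Lean document; each statement's English description precedes it below -/
import Mathlib

section
/- Partition' is equivalent to Partition under the following reduction: given positive integers k_1, ..., k_t with sum 2K, define k'_i = 4^i + 4^{t+1} * k_i, ℓ'_i = 4^i for 1 ≤ i ≤ t, and K̂ = 4^{t+1} * K + Σ_{i=1}^{t} 4^i. Then there exists a partition of the multiset {k'_1,...,k'_t, ℓ'_1,...,ℓ'_t} into three parts (A, B, C) with Σ A = Σ B + K̂ if and only if there exists a subset D of {k_1,...,k_t} (as a multiset of indices) with Σ_{i ∈ D} k_i = K. -/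
/-!
Read the reduced numbers in base 4. Index `i` contributes to the digit of `4 ^ (i + 1)` once for
each of `k' i, ℓ' i` placed in a part, so the low digits of `∑ A` lie in `{0, 1, 2}` and those of
`∑ B + K̂` in `{1, 2, 3}`, while the `k i` only contribute multiples of `4 ^ (t + 1)`. No carries
occur, so `∑ A = ∑ B + K̂` forces each low digit of `A` to exceed that of `B` by one, which happens
only when `B` is empty; the high parts then say that the `k i` with `k' i ∈ A` sum to `K`.
Conversely, for `i ∈ D` put `k' i` into `A`, otherwise `ℓ' i`, and everything else into `C`.
-/

open Finset

theorem sum_pow_succ_mul_add_pow_succ_mul (b : ℕ) {n : ℕ} (c : Fin n → ℕ) (z : ℕ) :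
    ∑ i : Fin n, b ^ ((i : ℕ) + 1) * c i + b ^ (n + 1) * z =
      b * (∑ i : Fin n, b ^ (i : ℕ) * c i + b ^ n * z) := by
  simp only [pow_succ, mul_add, mul_sum]
  ring_nf

theorem eq_of_sum_pow_mul_add_pow_mul_eq {b : ℕ} {n : ℕ} {d e : Fin n → ℕ} {x y : ℕ}
    (hd : ∀ i, d i < b) (he : ∀ i, e i < b)
    (h : ∑ i : Fin n, b ^ (i : ℕ) * d i + b ^ n * x = ∑ i : Fin n, b ^ (i : ℕ) * e i + b ^ n * y) :
    d = e ∧ x = y := by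
  induction n generalizing x y with
  | zero => simpa [Subsingleton.elim d e] using h
  | succ n ih =>
    have hb : 0 < b := (Nat.zero_le _).trans_lt (hd 0)
    have peel : ∀ c : Fin (n + 1) → ℕ, ∀ z, ∑ i : Fin (n + 1), b ^ (i : ℕ) * c i + b ^ (n + 1) * z =
        c 0 + b * (∑ i : Fin n, b ^ (i : ℕ) * c i.succ + b ^ n * z) := by
      intro c z
      rw [Fin.sum_univ_succ, ← sum_pow_succ_mul_add_pow_succ_mul]
      simp only [Fin.val_zero, pow_zero, one_mul, Fin.val_succ]
      ring
    rw [peel, peel] at h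
    have h0 : d 0 = e 0 := by
      simpa [Nat.add_mul_mod_self_left, Nat.mod_eq_of_lt (hd 0), Nat.mod_eq_of_lt (he 0)]
        using congrArg (· % b) h
    obtain ⟨htail, hxy⟩ := ih (x := x) (y := y) (fun i => hd i.succ) (fun i => he i.succ)
      (Nat.eq_of_mul_eq_mul_left hb (by rw [h0] at h; exact Nat.add_left_cancel h))
    exact ⟨funext fun i => Fin.cases h0 (congrFun htail) i, hxy⟩

section PairCount

variable {α γ : Type*} [DecidableEq γ]

def pairCount (f : α ⊕ α → γ) (c : γ) (i : α) : ℕ :=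
  (if f (.inl i) = c then 1 else 0) + (if f (.inr i) = c then 1 else 0)

theorem pairCount_le_two (f : α ⊕ α → γ) (c : γ) (i : α) : pairCount f c i ≤ 2 := by
  unfold pairCount
  split_ifs <;> omega

theorem sum_filter_eq_sum_pairCount [Fintype α] (f : α ⊕ α → γ) (c : γ) (val : α ⊕ α → ℕ)
    (w k : α → ℕ) (M : ℕ) (hl : ∀ i, val (.inl i) = w i + M * k i) (hr : ∀ i, val (.inr i) = w i) :
    ∑ x ∈ univ.filter (fun x => f x = c), val x =
      ∑ i, w i * pairCount f c i + M * ∑ i ∈ univ.filter (fun i => f (.inl i) = c), k i := by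
  rw [sum_filter, Fintype.sum_sum_type, sum_filter, mul_sum, ← sum_add_distrib, ← sum_add_distrib]
  refine sum_congr rfl fun i _ => ?_
  simp only [pairCount, hl, hr]
  split_ifs <;> ring

theorem pairCount_one_eq_zero (f : α ⊕ α → Fin 3) (i : α)
    (h : pairCount f 0 i = pairCount f 1 i + 1) : pairCount f 1 i = 0 := by
  unfold pairCount at *
  generalize f (.inl i) = a, f (.inr i) = b at *
  revert a b
  decide

end PairCount

theorem exists_sum_eq_of_partition' {t : ℕ} {k : Fin t → ℕ} {val : Fin t ⊕ Fin t → ℕ}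
    (hval : ∀ i : Fin t, val (.inl i) = 4 ^ ((i : ℕ) + 1) + 4 ^ (t + 1) * k i)
    (hval' : ∀ i : Fin t, val (.inr i) = 4 ^ ((i : ℕ) + 1)) (K : ℕ) (f : Fin t ⊕ Fin t → Fin 3)
    (hf : ∑ x ∈ univ.filter (fun x => f x = 0), val x =
      ∑ x ∈ univ.filter (fun x => f x = 1), val x +
        (4 ^ (t + 1) * K + ∑ i : Fin t, 4 ^ ((i : ℕ) + 1))) :
    ∃ D : Finset (Fin t), ∑ i ∈ D, k i = K := by
  simp only [sum_filter_eq_sum_pairCount f _ val _ k _ hval hval'] at hf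
  have hbase4 : ∑ i : Fin t, 4 ^ ((i : ℕ) + 1) * pairCount f 0 i
        + 4 ^ (t + 1) * ∑ i ∈ univ.filter (fun i => f (.inl i) = 0), k i =
      ∑ i : Fin t, 4 ^ ((i : ℕ) + 1) * (pairCount f 1 i + 1)
        + 4 ^ (t + 1) * (∑ i ∈ univ.filter (fun i => f (.inl i) = 1), k i + K) := by
    simp only [mul_add, mul_one, sum_add_distrib]
    omega
  rw [sum_pow_succ_mul_add_pow_succ_mul, sum_pow_succ_mul_add_pow_succ_mul] at hbase4
  obtain ⟨hdigits, hhigh⟩ := eq_of_sum_pow_mul_add_pow_mul_eq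
    (fun i => (pairCount_le_two f 0 i).trans_lt (by norm_num))
    (fun i => Nat.add_lt_add_right ((pairCount_le_two f 1 i).trans_lt (by norm_num)) 1)
    (Nat.eq_of_mul_eq_mul_left (by norm_num) hbase4)
  have hB : univ.filter (fun i => f (.inl i) = 1) = ∅ := by
    refine filter_false_of_mem fun i _ hi => ?_
    have := pairCount_one_eq_zero f i (congrFun hdigits i)
    simp [pairCount, hi] at this
  exact ⟨_, by simpa [hB] using hhigh⟩

theorem exists_partition'_of_subset {t : ℕ} {k : Fin t → ℕ} {val : Fin t ⊕ Fin t → ℕ}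
    (hval : ∀ i : Fin t, val (.inl i) = 4 ^ ((i : ℕ) + 1) + 4 ^ (t + 1) * k i)
    (hval' : ∀ i : Fin t, val (.inr i) = 4 ^ ((i : ℕ) + 1)) (D : Finset (Fin t)) :
    ∃ f : Fin t ⊕ Fin t → Fin 3, ∑ x ∈ univ.filter (fun x => f x = 0), val x =
      ∑ x ∈ univ.filter (fun x => f x = 1), val x +
        (4 ^ (t + 1) * ∑ i ∈ D, k i + ∑ i : Fin t, 4 ^ ((i : ℕ) + 1)) := by
  set f := Sum.elim (fun i => if i ∈ D then (0 : Fin 3) else 2) (fun i => if i ∈ D then 2 else 0)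
  have hA : ∀ i, pairCount f 0 i = 1 := fun i => by by_cases hi : i ∈ D <;> simp [f, pairCount, hi]
  have hB : ∀ i, pairCount f 1 i = 0 := fun i => by by_cases hi : i ∈ D <;> simp [f, pairCount, hi]
  have hAk : univ.filter (fun i => f (.inl i) = 0) = D := by
    ext i; by_cases hi : i ∈ D <;> simp [f, hi]
  have hBk : univ.filter (fun i => f (.inl i) = 1) = ∅ :=
    filter_false_of_mem fun i _ => by by_cases hi : i ∈ D <;> simp [f, hi]
  refine ⟨f, ?_⟩
  simp only [sum_filter_eq_sum_pairCount f _ val _ k _ hval hval', hAk, hBk, hA, hB]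
  simp only [mul_one, mul_zero, sum_const_zero, sum_empty, zero_add]
  ring

theorem partition'_reduction_correct_general
    (t K : ℕ) (k : Fin t → ℕ)
    (val : Fin t ⊕ Fin t → ℕ)
    (hval : ∀ i : Fin t, val (Sum.inl i) = 4 ^ ((i : ℕ) + 1) + 4 ^ (t + 1) * k i)
    (hval' : ∀ i : Fin t, val (Sum.inr i) = 4 ^ ((i : ℕ) + 1))
    (Khat : ℕ)
    (hKhat : Khat = 4 ^ (t + 1) * K + ∑ i : Fin t, 4 ^ ((i : ℕ) + 1)) :
    (∃ f : Fin t ⊕ Fin t → Fin 3,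
        ∑ x ∈ Finset.univ.filter (fun x => f x = 0), val x =
          (∑ x ∈ Finset.univ.filter (fun x => f x = 1), val x) + Khat) ↔
      (∃ D : Finset (Fin t), ∑ i ∈ D, k i = K) := by
  subst hKhat
  constructor
  · rintro ⟨f, hf⟩
    exact exists_sum_eq_of_partition' hval hval' K f hf
  · rintro ⟨D, rfl⟩
    exact exists_partition'_of_subset hval hval' D

/-- Correctness of the reduction from Partition to Partition':
given positive integers `k 1, ..., k t` summing to `2*K`, with
`k' i = 4^i + 4^(t+1) * k i`, `ℓ' i = 4^i`, and
`K̂ = 4^(t+1)*K + ∑ i, 4^i`, the `2t` numbers `k' i, ℓ' i` admit a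
three-way partition `(A,B,C)` with `∑ A = ∑ B + K̂` iff some subset of the
`k i` sums to `K`. -/
theorem partition'_reduction_correct
    (t K : ℕ) (k : Fin t → ℕ) (hk : ∀ i, 0 < k i)
    (hsum : ∑ i, k i = 2 * K)
    (val : Fin t ⊕ Fin t → ℕ)
    (hval : ∀ i : Fin t, val (Sum.inl i) = 4 ^ ((i : ℕ) + 1) + 4 ^ (t + 1) * k i)
    (hval' : ∀ i : Fin t, val (Sum.inr i) = 4 ^ ((i : ℕ) + 1))
    (Khat : ℕ)
    (hKhat : Khat = 4 ^ (t + 1) * K + ∑ i : Fin t, 4 ^ ((i : ℕ) + 1)) :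
    (∃ f : Fin t ⊕ Fin t → Fin 3,
        ∑ x ∈ Finset.univ.filter (fun x => f x = 0), val x =
          (∑ x ∈ Finset.univ.filter (fun x => f x = 1), val x) + Khat) ↔
      (∃ D : Finset (Fin t), ∑ i ∈ D, k i = K) :=
  partition'_reduction_correct_general t K k val hval hval' Khat hKhat
end

section
/- A directed graph on a finite candidate set is the strict majority graph of some pair of weak orders if and only if it is the strict majority graph of some pair of linear orders. Concretely: for any two weak orders v_1, v_2 on a finite set C, there exist two linear orders v'_1, v'_2 on C such that for all distinct a, b ∈ C, the number of voters among {v'_1, v'_2} strictly preferring a to b exceeds the number strictly preferring b to a if and only if the same holds for {v_1, v_2}. -/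
/-- Strict preference induced by a (weak-order) relation. -/
def StrictPref {C : Type*} (v : C → C → Prop) (a b : C) : Prop := v a b ∧ ¬ v b a

open scoped Classical in
/-- Number of the two voters `v₁, v₂` strictly preferring `a` to `b`. -/
noncomputable def twoVoterCount {C : Type*} (v₁ v₂ : C → C → Prop) (a b : C) : ℕ :=
  (if StrictPref v₁ a b then 1 else 0) + (if StrictPref v₂ a b then 1 else 0)

/-!
Refine `v₁` lexicographically by `v₂` and `v₂` by `v₁`, and break the remaining ties (pairs
tied in both orders) by a fixed linear order, in opposite directions for the two voters. A pair
strictly ranked by some voter keeps its majority edge, while a pair tied by both voters gets one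
vote each way, so it stays without an edge.
-/

def lexRefine {C : Type*} (v R : C → C → Prop) (a b : C) : Prop := v a b ∧ (v b a → R a b)

section lexRefine

variable {C : Type*} {v R : C → C → Prop}

theorem transitive_lexRefine (hv : Transitive v) (hR : Transitive R) :
    Transitive (lexRefine v R) :=
  fun _ _ _ ⟨hab, hbaR⟩ ⟨hbc, hcbR⟩ =>
    ⟨hv hab hbc, fun hca => hR (hbaR (hv hbc hca)) (hcbR (hv hca hab))⟩

theorem total_lexRefine (hv : Total v) (hR : Total R) : Total (lexRefine v R) := by
  intro a b
  by_cases hab : v a b <;> by_cases hba : v b a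
  · exact (hR a b).imp (fun h => ⟨hab, fun _ => h⟩) (fun h => ⟨hba, fun _ => h⟩)
  · exact Or.inl ⟨hab, fun h => absurd h hba⟩
  · exact Or.inr ⟨hba, fun h => absurd h hab⟩
  · exact absurd (hv a b) (not_or.2 ⟨hab, hba⟩)

theorem antisymmetric_lexRefine (hR : AntiSymmetric R) : AntiSymmetric (lexRefine v R) :=
  fun _ _ ⟨hab, hbaR⟩ ⟨hba, habR⟩ => hR (hbaR hba) (habR hab)

end lexRefine

section twoVoterCount

variable {C : Type*} {v₁ v₂ : C → C → Prop}

theorem strictPref_iff_not (hv : Total v₁) {a b : C} : StrictPref v₁ a b ↔ ¬ v₁ b a :=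
  ⟨And.right, fun hba => ⟨(hv a b).resolve_right hba, hba⟩⟩

theorem twoVoterCount_gt_iff (h₁ : Total v₁) (h₂ : Total v₂) (a b : C) :
    twoVoterCount v₁ v₂ a b > twoVoterCount v₁ v₂ b a ↔
      v₁ a b ∧ v₂ a b ∧ ¬ (v₁ b a ∧ v₂ b a) := by
  classical
  simp only [twoVoterCount, strictPref_iff_not h₁, strictPref_iff_not h₂]
  have := h₁ a b
  have := h₂ a b
  split_ifs <;> norm_num <;> tauto

theorem twoVoterCount_gt_iff_of_antisymmetric (h₁ : Total v₁) (h₂ : Total v₂)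
    (h₁anti : AntiSymmetric v₁) {a b : C} (hab : a ≠ b) :
    twoVoterCount v₁ v₂ a b > twoVoterCount v₁ v₂ b a ↔ v₁ a b ∧ v₂ a b := by
  rw [twoVoterCount_gt_iff h₁ h₂]
  exact ⟨fun h => ⟨h.1, h.2.1⟩, fun h => ⟨h.1, h.2, fun h' => hab (h₁anti h.1 h'.1)⟩⟩

end twoVoterCount

theorem majority_graph_two_weak_orders_iff_two_total_orders_general
    {C : Type*}
    (v₁ v₂ : C → C → Prop)
    (h₁trans : Transitive v₁) (h₁total : Total v₁)
    (h₂trans : Transitive v₂) (h₂total : Total v₂) :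
    ∃ v₁' v₂' : C → C → Prop,
      Transitive v₁' ∧ Total v₁' ∧ AntiSymmetric v₁' ∧
      Transitive v₂' ∧ Total v₂' ∧ AntiSymmetric v₂' ∧
      ∀ a b : C, a ≠ b →
        (twoVoterCount v₁' v₂' a b > twoVoterCount v₁' v₂' b a ↔
         twoVoterCount v₁ v₂ a b > twoVoterCount v₁ v₂ b a) := by
  let _ : LinearOrder C := IsWellOrder.linearOrder WellOrderingRel
  have hle_trans : Transitive (α := C) (· ≤ ·) := fun _ _ _ => le_trans
  have hle_anti : AntiSymmetric (α := C) (· ≤ ·) := fun _ _ => le_antisymm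
  have hge_trans : Transitive (α := C) (· ≥ ·) := fun _ _ _ hab hbc => le_trans hbc hab
  have hge_total : Total (α := C) (· ≥ ·) := fun a b => le_total b a
  have hge_anti : AntiSymmetric (α := C) (· ≥ ·) := fun _ _ hab hba => le_antisymm hba hab
  have htotal₁ := total_lexRefine h₁total (total_lexRefine h₂total le_total)
  have hanti₁ :=
    antisymmetric_lexRefine (v := v₁) (antisymmetric_lexRefine (v := v₂) hle_anti)
  have htotal₂ := total_lexRefine h₂total (total_lexRefine h₁total hge_total)
  refine ⟨lexRefine v₁ (lexRefine v₂ (· ≤ ·)), lexRefine v₂ (lexRefine v₁ (· ≥ ·)),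
    transitive_lexRefine h₁trans (transitive_lexRefine h₂trans hle_trans), htotal₁, hanti₁,
    transitive_lexRefine h₂trans (transitive_lexRefine h₁trans hge_trans), htotal₂,
    antisymmetric_lexRefine (antisymmetric_lexRefine hge_anti), fun a b hab => ?_⟩
  rw [twoVoterCount_gt_iff_of_antisymmetric htotal₁ htotal₂ hanti₁ hab,
    twoVoterCount_gt_iff h₁total h₂total]
  have hab' : ¬ (a ≤ b ∧ b ≤ a) := fun h => hab (le_antisymm h.1 h.2)
  simp only [lexRefine]
  tauto

/-- A majority graph can be induced by two weak orders iff by two total orders: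
for any two weak orders (total preorders) `v₁, v₂` on a finite set `C`, there
are two linear orders `v₁', v₂'` on `C` inducing the same strict majority
graph. -/
theorem majority_graph_two_weak_orders_iff_two_total_orders
    {C : Type*} [Fintype C]
    (v₁ v₂ : C → C → Prop)
    (h₁trans : Transitive v₁) (h₁total : Total v₁)
    (h₂trans : Transitive v₂) (h₂total : Total v₂) :
    ∃ v₁' v₂' : C → C → Prop,
      Transitive v₁' ∧ Total v₁' ∧ AntiSymmetric v₁' ∧
      Transitive v₂' ∧ Total v₂' ∧ AntiSymmetric v₂' ∧
      ∀ a b : C, a ≠ b →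
        (twoVoterCount v₁' v₂' a b > twoVoterCount v₁' v₂' b a ↔
         twoVoterCount v₁ v₂ a b > twoVoterCount v₁ v₂ b a) :=
  majority_graph_two_weak_orders_iff_two_total_orders_general v₁ v₂ h₁trans h₁total h₂trans h₂total
end

section
/- Correctness of the Borda-max single-peaked manipulation reduction: let k_1,...,k_t be positive integers summing to 2K. Consider 3 candidates {a, p, b} with fixed nonmanipulator scores score(p) = 6K, score(a) = score(b) = 9K. Each manipulator i (of weight k_i) casts one of the single-peaked top orders over axis a < p < b, scored by Borda with the max extension; every vote ranking p strictly first gives p 2 points and gives a and b the points: (p>a>b) gives a 1, b 0; (p>b>a) gives b 1, a 0; (p>a∼b) gives both a and b 1. Then there exists an assignment of votes to manipulators ranking p strictly first such that p's final score is ≥ the final scores of both a and b, if and only if some subset of {k_1,...,k_t} sums to K. -/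
/-! Each vote ranking `p` first gives `p` two points per unit of weight and gives at least one of
`a`, `b` a point. So with `A`, `B` the manipulators' contributions to `a` and `b`, the conditions
`10K ≥ 9K + A` and `10K ≥ 9K + B` give `A + B ≤ 2K = ∑ kᵢ ≤ A + B`, forcing `A = K`: the
manipulators who give `a` a point have total weight `K`. Conversely, voting `p > a > b` on a subset
of weight `K` and `p > b > a` on the rest gives `a` and `b` exactly `K` each. -/

open Finset

theorem Finset.sum_le_sum_filter_add_sum_filter {ι M : Type*} [AddCommMonoid M] [PartialOrder M]
    [IsOrderedAddMonoid M] [CanonicallyOrderedAdd M] (s : Finset ι) (f : ι → M)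
    {p q : ι → Prop} [DecidablePred p] [DecidablePred q] (hpq : ∀ i ∈ s, p i ∨ q i) :
    ∑ i ∈ s, f i ≤ ∑ i ∈ s.filter p, f i + ∑ i ∈ s.filter q, f i := by
  rw [← sum_filter_add_sum_filter_not s p]
  gcongr with i hi
  exact (hpq i hi).resolve_left

section BordaMax

variable {ι : Type*} [Fintype ι] (k : ι → ℕ)

theorem sum_mul_score_a_eq_sum_filter (v : ι → Fin 3) :
    ∑ i, k i * (if v i = 0 then 1 else if v i = 1 then 0 else 1) =
      ∑ i ∈ univ.filter (v · ≠ 1), k i := by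
  rw [sum_filter]
  refine sum_congr rfl fun i _ => ?_
  split_ifs <;> simp_all

theorem sum_mul_score_b_eq_sum_filter (v : ι → Fin 3) :
    ∑ i, k i * (if v i = 0 then 0 else 1) = ∑ i ∈ univ.filter (v · ≠ 0), k i := by
  rw [sum_filter]
  refine sum_congr rfl fun i _ => ?_
  split_ifs <;> simp_all

theorem sum_filter_ne_one_eq_of_le {K : ℕ} (hsum : ∑ i, k i = 2 * K) (v : ι → Fin 3)
    (ha : ∑ i ∈ univ.filter (v · ≠ 1), k i ≤ K) (hb : ∑ i ∈ univ.filter (v · ≠ 0), k i ≤ K) :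
    ∑ i ∈ univ.filter (v · ≠ 1), k i = K := by
  have hcover := sum_le_sum_filter_add_sum_filter univ k (p := (v · ≠ 1)) (q := (v · ≠ 0))
    fun i _ => by grind
  omega

variable [DecidableEq ι] (D : Finset ι)

theorem filter_ite_mem_ne_one :
    univ.filter (fun i => (if i ∈ D then 0 else 1 : Fin 3) ≠ 1) = D := by
  ext i
  by_cases hi : i ∈ D <;> simp [hi]

theorem filter_ite_mem_ne_zero :
    univ.filter (fun i => (if i ∈ D then 0 else 1 : Fin 3) ≠ 0) = Dᶜ := by
  ext i
  by_cases hi : i ∈ D <;> simp [hi]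

end BordaMax

theorem borda_max_single_peaked_reduction_correct_general
    (t K : ℕ) (k : Fin t → ℕ) (hsum : ∑ i, k i = 2 * K) :
    (∃ v : Fin t → Fin 3,
        6 * K + ∑ i, k i * 2 ≥
          9 * K + ∑ i, k i * (if v i = 0 then 1 else if v i = 1 then 0 else 1) ∧
        6 * K + ∑ i, k i * 2 ≥
          9 * K + ∑ i, k i * (if v i = 0 then 0 else 1)) ↔
      (∃ D : Finset (Fin t), ∑ i ∈ D, k i = K) := by
  have hp : ∑ i, k i * 2 = 4 * K := by rw [← sum_mul, hsum]; ring
  simp only [hp, sum_mul_score_a_eq_sum_filter, sum_mul_score_b_eq_sum_filter]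
  constructor
  · rintro ⟨v, ha, hb⟩
    exact ⟨_, sum_filter_ne_one_eq_of_le k hsum v (by omega) (by omega)⟩
  · rintro ⟨D, hD⟩
    refine ⟨fun i => if i ∈ D then 0 else 1, ?_, ?_⟩
    · rw [filter_ite_mem_ne_one, hD]
      omega
    · have hsplit := sum_compl_add_sum D k
      rw [filter_ite_mem_ne_zero]
      omega

/-- Correctness of the Borda-max single-peaked manipulation reduction:
manipulator `i` of weight `k i` casts vote `v i : Fin 3`
(`0` = p>a>b, `1` = p>b>a, `2` = p>a∼b); p always gets 2 per unit weight,
and under the max extension `a` gets 1 from votes 0 and 2, `b` gets 1 from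
votes 1 and 2. With nonmanipulator scores p: 6K, a: 9K, b: 9K, the
manipulators (all ranking p strictly first) can make p's score at least those
of a and b iff some subset of the `k i` sums to `K`. -/
theorem borda_max_single_peaked_reduction_correct
    (t K : ℕ) (k : Fin t → ℕ) (hk : ∀ i, 0 < k i) (hsum : ∑ i, k i = 2 * K) :
    (∃ v : Fin t → Fin 3,
        6 * K + ∑ i, k i * 2 ≥
          9 * K + ∑ i, k i * (if v i = 0 then 1 else if v i = 1 then 0 else 1) ∧
        6 * K + ∑ i, k i * 2 ≥
          9 * K + ∑ i, k i * (if v i = 0 then 0 else 1)) ↔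
      (∃ D : Finset (Fin t), ∑ i ∈ D, k i = K) :=
  borda_max_single_peaked_reduction_correct_general t K k hsum
end

section
/- Correctness of the Borda-average single-peaked manipulation reduction: let k_1,...,k_t be positive even integers summing to 2K and let K̂ be a positive even integer with K̂ ≤ 2K. Consider 3 candidates {a,p,b} with nonmanipulator scores score(p) = 6K, score(a) = 15K + 3K̂/2, score(b) = 15K − 3K̂/2. Manipulator i has weight 3k_i and casts one of the votes (p>a>b) contributing per unit weight (a:1, b:0, p:2), (p>b>a) contributing (a:0, b:1, p:2), or (p>a∼b) contributing (a:1/2, b:1/2, p:2). Then the manipulators can vote so that p's total score is ≥ the totals of both a and b if and only if there is a partition (A,B,C) of {k_1,...,k_t} with Σ A = Σ B + K̂. -/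
open Finset

/-
With `A`, `B`, `C` the total `k`-mass of the manipulators voting `p>a>b`, `p>b>a` and `p>a∼b`,
and `A + B + C = 2K`, the final scores are `p = 18K`, `a = 18K + 3(K̂ + A - B)/2` and
`b = 18K - 3(K̂ + A - B)/2`. So `p` is a (co-)winner exactly when `B = A + K̂`; exchanging the
roles of the first two votes turns this into the partition condition `∑ A = ∑ B + K̂`.
-/

theorem sum_mul_ite_fin_three {ι R : Type*} [Fintype ι] [CommRing R]
    (w : ι → R) (v : ι → Fin 3) (c₀ c₁ c₂ : R) :
    ∑ i, w i * (if v i = 0 then c₀ else if v i = 1 then c₁ else c₂) =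
      c₂ * ∑ i, w i + (c₀ - c₂) * ∑ i ∈ univ.filter (fun i => v i = 0), w i +
        (c₁ - c₂) * ∑ i ∈ univ.filter (fun i => v i = 1), w i := by
  simp only [sum_filter, mul_sum, ← sum_add_distrib]
  refine sum_congr rfl fun i _ => ?_
  split_ifs <;> simp_all <;> ring

theorem borda_average_manipulation_iff {t K Khat : ℕ} {k : Fin t → ℕ}
    (hsum : ∑ i, k i = 2 * K) (v : Fin t → Fin 3) :
    ((6 * K + ∑ i, (3 * k i : ℚ) * 2 ≥
          (15 * K + 3 * Khat / 2) +
            ∑ i, (3 * k i : ℚ) * (if v i = 0 then 1 else if v i = 1 then 0 else 1/2)) ∧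
        (6 * K + ∑ i, (3 * k i : ℚ) * 2 ≥
          (15 * K - 3 * Khat / 2) +
            ∑ i, (3 * k i : ℚ) * (if v i = 0 then 0 else if v i = 1 then 1 else 1/2))) ↔
      ∑ i ∈ univ.filter (fun i => v i = 1), k i =
        (∑ i ∈ univ.filter (fun i => v i = 0), k i) + Khat := by
  have hsumQ : ∑ i, (k i : ℚ) = 2 * K := by exact_mod_cast hsum
  have hp : ∑ i, (3 * k i : ℚ) * 2 = 12 * K := by
    rw [← sum_mul, ← mul_sum, hsumQ]; ring
  have hmass : ∀ j : Fin 3, ∑ i ∈ univ.filter (fun i => v i = j), (3 * k i : ℚ) =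
      3 * ((∑ i ∈ univ.filter (fun i => v i = j), k i : ℕ) : ℚ) := by
    intro j; rw [← mul_sum, Nat.cast_sum]
  rw [hp, sum_mul_ite_fin_three, sum_mul_ite_fin_three, ← mul_sum, hsumQ, hmass, hmass,
    ← @Nat.cast_inj ℚ, Nat.cast_add]
  constructor
  · rintro ⟨ha, hb⟩; linarith
  · intro h; constructor <;> linarith

theorem borda_average_single_peaked_reduction_correct_general
    (t K Khat : ℕ) (k : Fin t → ℕ) (hsum : ∑ i, k i = 2 * K) :
    (∃ v : Fin t → Fin 3,
        (6 * K + ∑ i, (3 * k i : ℚ) * 2 ≥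
          (15 * K + 3 * Khat / 2) +
            ∑ i, (3 * k i : ℚ) * (if v i = 0 then 1 else if v i = 1 then 0 else 1/2)) ∧
        (6 * K + ∑ i, (3 * k i : ℚ) * 2 ≥
          (15 * K - 3 * Khat / 2) +
            ∑ i, (3 * k i : ℚ) * (if v i = 0 then 0 else if v i = 1 then 1 else 1/2))) ↔
      (∃ f : Fin t → Fin 3,
        ∑ i ∈ Finset.univ.filter (fun i => f i = 0), k i =
          (∑ i ∈ Finset.univ.filter (fun i => f i = 1), k i) + Khat) := by
  simp_rw [borda_average_manipulation_iff hsum]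
  constructor <;> rintro ⟨v, hv⟩ <;>
    exact ⟨Equiv.swap 0 1 ∘ v, by simpa [Equiv.swap_apply_eq_iff] using hv⟩

/-- Correctness of the Borda-average single-peaked manipulation reduction:
`k 1, ..., k t` positive even integers summing to `2K`, `K̂` positive even with
`K̂ ≤ 2K`. Nonmanipulator scores: p: 6K, a: 15K + 3K̂/2, b: 15K − 3K̂/2.
Manipulator `i` has weight `3 * k i` and casts `v i : Fin 3`
(`0` = p>a>b: (a:1, b:0, p:2); `1` = p>b>a: (a:0, b:1, p:2);
`2` = p>a∼b: (a:1/2, b:1/2, p:2)). The manipulators can make p's total score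
at least those of a and b iff there is a partition `(A,B,C)` of the `k i`
with `∑ A = ∑ B + K̂`. -/
theorem borda_average_single_peaked_reduction_correct
    (t K Khat : ℕ) (k : Fin t → ℕ)
    (hk : ∀ i, 0 < k i) (hkeven : ∀ i, Even (k i)) (hsum : ∑ i, k i = 2 * K)
    (hKhat : 0 < Khat) (hKhatEven : Even Khat) (hKhatle : Khat ≤ 2 * K) :
    (∃ v : Fin t → Fin 3,
        (6 * K + ∑ i, (3 * k i : ℚ) * 2 ≥
          (15 * K + 3 * Khat / 2) +
            ∑ i, (3 * k i : ℚ) * (if v i = 0 then 1 else if v i = 1 then 0 else 1/2)) ∧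
        (6 * K + ∑ i, (3 * k i : ℚ) * 2 ≥
          (15 * K - 3 * Khat / 2) +
            ∑ i, (3 * k i : ℚ) * (if v i = 0 then 0 else if v i = 1 then 1 else 1/2))) ↔
      (∃ f : Fin t → Fin 3,
        ∑ i ∈ Finset.univ.filter (fun i => f i = 0), k i =
          (∑ i ∈ Finset.univ.filter (fun i => f i = 1), k i) + Khat) :=
  borda_average_single_peaked_reduction_correct_general t K Khat k hsum
end

section
/- Exact-cover characterization for plurality-average control by adding voters: let B be a set of 3k elements (k ≥ 1, with k divisible by 4 if desired) and S a finite collection of 3-element subsets of B. For a subcollection S' ⊆ S, say S' is 'winning' if |S'| ≤ k and for every b ∈ B: |S'| ≥ (k − 1) + |{S ∈ S' : b ∈ S}|. Then a winning subcollection exists if and only if S contains an exact cover of B (a subcollection in which every element of B occurs in exactly one member). -/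
/-!
Count incidences between `B` and an `r`-uniform subcollection `F`: the degrees
`#{T ∈ F | b ∈ T}` sum to `r * #F`. A winning `F` has `#F ≤ k` and all degrees at most
`#F - (k - 1) ≤ 1`. If `#F < k` all degrees vanish, so `F = ∅` and then `k = 1`; otherwise
`#F = k`, the degrees sum to `#B`, and hence they are all `1`. Conversely, for an exact cover the degrees
sum to `#B = r * k`, so `#F = k`, and `k - 1 + 1 ≤ k` is the winning condition.
-/

open Finset

namespace Finset

variable {α : Type*} [DecidableEq α] {B : Finset α} {F : Finset (Finset α)} {r k : ℕ}

theorem sum_card_filter_mem_of_uniform (hF : ∀ T ∈ F, T ⊆ B ∧ #T = r) :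
    ∑ b ∈ B, #{T ∈ F | b ∈ T} = r * #F := by
  calc ∑ b ∈ B, #{T ∈ F | b ∈ T}
      = ∑ T ∈ F, #(B ∩ T) := by
        simp_rw [card_filter, ← filter_mem_eq_inter, card_filter]
        exact sum_comm
    _ = ∑ T ∈ F, r := sum_congr rfl fun T hT => by
        rw [inter_eq_right.mpr (hF T hT).1, (hF T hT).2]
    _ = r * #F := by rw [sum_const, smul_eq_mul, mul_comm]

theorem card_filter_mem_eq_one_of_le_one (hF : ∀ T ∈ F, T ⊆ B ∧ #T = r)
    (hB : #B = r * #F) (hle : ∀ b ∈ B, #{T ∈ F | b ∈ T} ≤ 1) :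
    ∀ b ∈ B, #{T ∈ F | b ∈ T} = 1 := by
  refine (sum_eq_sum_iff_of_le hle).mp ?_
  rw [sum_card_filter_mem_of_uniform hF, ← hB, card_eq_sum_ones]

theorem card_filter_mem_eq_one_of_winning (hk : k ≠ 1) (hF : ∀ T ∈ F, T ⊆ B ∧ #T = r)
    (hB : #B = r * k) (hcard : #F ≤ k) (hwin : ∀ b ∈ B, k - 1 + #{T ∈ F | b ∈ T} ≤ #F) :
    ∀ b ∈ B, #{T ∈ F | b ∈ T} = 1 := by
  intro b hb
  have hFk : #F = k := by
    by_contra hne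
    have hzero : ∀ b ∈ B, #{T ∈ F | b ∈ T} = 0 := fun b hb => by
      have := hwin b hb
      omega
    have hsum : r * #F = 0 := by
      rw [← sum_card_filter_mem_of_uniform hF]
      exact sum_eq_zero hzero
    have hb' := hwin b hb
    rcases Nat.mul_eq_zero.mp hsum with hr | hF0
    · rw [hr, zero_mul, card_eq_zero] at hB
      simp [hB] at hb
    · omega
  refine card_filter_mem_eq_one_of_le_one hF (by rw [hB, hFk]) (fun b hb => ?_) b hb
  have := hwin b hb
  omega

theorem winning_of_card_filter_mem_eq_one (hr : 0 < r) (hF : ∀ T ∈ F, T ⊆ B ∧ #T = r)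
    (hB : #B = r * k) (hcov : ∀ b ∈ B, #{T ∈ F | b ∈ T} = 1) :
    #F ≤ k ∧ ∀ b ∈ B, k - 1 + #{T ∈ F | b ∈ T} ≤ #F := by
  have hFk : #F = k := by
    refine Nat.eq_of_mul_eq_mul_left hr ?_
    rw [← sum_card_filter_mem_of_uniform hF, sum_congr rfl hcov, ← card_eq_sum_ones, hB]
  refine ⟨hFk.le, fun b hb => ?_⟩
  have hk : 0 < k := Nat.pos_of_mul_pos_left (hB ▸ card_pos.mpr ⟨b, hb⟩)
  rw [hcov b hb, hFk]
  omega

end Finset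

theorem plurality_average_ccav_exact_cover_general
    {α : Type*} [DecidableEq α] (k : ℕ) (hk4 : 4 ∣ k)
    (B : Finset α) (hB : B.card = 3 * k)
    (S : Finset (Finset α)) (hS : ∀ T ∈ S, T ⊆ B ∧ T.card = 3) :
    (∃ S' ⊆ S, S'.card ≤ k ∧
        ∀ b ∈ B, (k - 1) + (S'.filter (fun T => b ∈ T)).card ≤ S'.card) ↔
      (∃ S' ⊆ S, ∀ b ∈ B, (S'.filter (fun T => b ∈ T)).card = 1) := by
  have hk : k ≠ 1 := by
    rintro rfl
    norm_num at hk4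
  constructor
  · rintro ⟨S', hsub, hcard, hwin⟩
    exact ⟨S', hsub, card_filter_mem_eq_one_of_winning hk (fun T hT => hS T (hsub hT)) hB
      hcard hwin⟩
  · rintro ⟨S', hsub, hcov⟩
    exact ⟨S', hsub, winning_of_card_filter_mem_eq_one three_pos (fun T hT => hS T (hsub hT))
      hB hcov⟩

/-- Exact-cover characterization for plurality-average control by adding
voters: `B` has `3k` elements (`k ≥ 1`, `4 ∣ k`), `S` is a collection of
3-element subsets of `B`. A subcollection `S' ⊆ S` is 'winning' if
`|S'| ≤ k` and for every `b ∈ B`, `|S'| ≥ (k−1) + #{T ∈ S' : b ∈ T}`.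
Then a winning subcollection exists iff `S` contains an exact cover of `B`. -/
theorem plurality_average_ccav_exact_cover
    {α : Type*} [DecidableEq α] (k : ℕ) (hk : 1 ≤ k) (hk4 : 4 ∣ k)
    (B : Finset α) (hB : B.card = 3 * k)
    (S : Finset (Finset α)) (hS : ∀ T ∈ S, T ⊆ B ∧ T.card = 3) :
    (∃ S' ⊆ S, S'.card ≤ k ∧
        ∀ b ∈ B, (k - 1) + (S'.filter (fun T => b ∈ T)).card ≤ S'.card) ↔
      (∃ S' ⊆ S, ∀ b ∈ B, (S'.filter (fun T => b ∈ T)).card = 1) :=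
  plurality_average_ccav_exact_cover_general k hk4 B hB S hS
end
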